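/- arXiv:2502.15556 — 2 statements merged into one kernel-verified Lean document; each statement's English description precedes it below -/
import Mathlib

section
/- For the π/3 fixed-point recursion, if the overlap satisfies |⟨t|U_m|s⟩|² = 1 − ε^{3^m} for all m (where ε = 1 − λ ∈ [0,1)), and the number of oracle queries q satisfies 3^m = 2q + 1, then to guarantee |⟨t|U_m|s⟩|² ≥ 1 − δ it suffices to take q ≥ (ln δ / ln(1 − λ) − 1)/2. -/
theorem stmt_5 (lam δ : ℝ) (hlam : lam ∈ Set.Ioo (0 : ℝ) 1)
    (hδ : δ ∈ Set.Ioo (0 : ℝ) 1) (m : ℕ)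
    (hq : ((3 ^ m : ℝ) - 1) / 2 ≥ (Real.log δ / Real.log (1 - lam) - 1) / 2) :
    1 - (1 - lam) ^ (3 ^ m) ≥ 1 - δ := by
  obtain ⟨hl0, hl1⟩ := hlam
  obtain ⟨hd0, hd1⟩ := hδ
  have hx0 : (0:ℝ) < 1 - lam := by linarith
  have hx1 : 1 - lam < 1 := by linarith
  have hlog : Real.log (1 - lam) < 0 := Real.log_neg hx0 hx1
  have h1 : (3 ^ m : ℝ) ≥ Real.log δ / Real.log (1 - lam) := by linarith
  have h2 : (3 ^ m : ℝ) * Real.log (1 - lam) ≤ Real.log δ := by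
    have := (div_le_iff_of_neg hlog).mp h1
    linarith
  have h3 : (1 - lam) ^ (3 ^ m) ≤ δ := by
    have : Real.log ((1 - lam) ^ (3 ^ m)) ≤ Real.log δ := by
      rw [Real.log_pow]; push_cast; linarith
    exact (Real.log_le_log_iff (pow_pos hx0 _) hd0).mp this
  linarith
end

section
/- If O is a unitary on H ⊗ H' acting as O(x ⊗ y) = x ⊗ (shift by f(x) of y) for an indicator f, and Z(β) = exp(−iβ x̂) acts on the ancilla prepared in the zero-momentum eigenstate, then the conjugated operator Z(−β) O Z(β) acts on states x ⊗ |0⟩_p as multiplication by exp(iβ f(x)), i.e., it is e^{iβ} on target states and identity on non-target states. Finite-dimensional analogue: for a projection P on H and the controlled-shift O = P⊗X + (1−P)⊗1 on H ⊗ ℂ[ℤ], with Z(β) = 1⊗(multiplication by exp(−iβn) on basis |n⟩), and the ancilla in the uniform momentum-zero state, Z(−β)OZ(β) restricted to H⊗|0⟩_p equals (exp(iβ)P + (1−P)) ⊗ 1. -/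
theorem stmt_17 {H : Type*} [NormedAddCommGroup H] [InnerProductSpace ℂ H]
    [CompleteSpace H] (N : ℕ) [NeZero N] (P : H →L[ℂ] H)
    (hsa : IsSelfAdjoint P) (hidem : P ∘L P = P) (k : ℤ) :
    let β : ℝ := 2 * Real.pi * k / N
    -- `H ⊗ ℂ^(ZMod N)` is modelled as `ZMod N → H`
    let Xop : (ZMod N → H) → (ZMod N → H) := fun Ψ n => Ψ (n - 1)
    let Zop : ℝ → (ZMod N → H) → (ZMod N → H) :=
      fun γ Ψ n => Complex.exp (-(Complex.I * γ * (n.val : ℕ))) • Ψ n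
    -- controlled shift oracle `O = P ⊗ X + (1 − P) ⊗ 1`
    let O : (ZMod N → H) → (ZMod N → H) := fun Ψ n => P (Ψ (n - 1)) + (1 - P) (Ψ n)
    -- `v` tensored with the zero-momentum ancilla state `(1/√N) ∑ₙ |n⟩`
    let amb : H → (ZMod N → H) := fun v _ => ((1 / Real.sqrt N : ℝ) : ℂ) • v
    ∀ v : H, Zop (-β) (O (Zop β (amb v)))
      = amb (Complex.exp (Complex.I * β) • P v + (1 - P) v) := by
  intro β Xop Zop O amb v
  have hN : (N : ℝ) ≠ 0 := Nat.cast_ne_zero.mpr (NeZero.ne N)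
  have hβN : (β : ℂ) * N = 2 * Real.pi * k := by
    have hNC : (N : ℂ) ≠ 0 := Nat.cast_ne_zero.mpr (NeZero.ne N)
    show ((2 * Real.pi * k / N : ℝ) : ℂ) * N = 2 * Real.pi * k
    push_cast
    field_simp
  funext n
  have key : ∃ t : ℤ, ((n.val : ℤ)) = (((n - 1 : ZMod N).val : ℤ)) + 1 + t * N := by
    have h : ((((n.val : ℤ) - ((n - 1 : ZMod N).val : ℤ) - 1) : ℤ) : ZMod N) = 0 := by
      push_cast [ZMod.natCast_val, ZMod.intCast_cast, ZMod.cast_id]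
      ring
    obtain ⟨t, ht⟩ := (ZMod.intCast_zmod_eq_zero_iff_dvd _ N).mp h
    exact ⟨t, by linarith [ht]⟩
  obtain ⟨t, ht⟩ := key
  have hn : ((n.val : ℕ) : ℂ) = (((n - 1 : ZMod N).val : ℕ) : ℂ) + 1 + t * N := by
    exact_mod_cast congrArg (Int.cast : ℤ → ℂ) ht
  have hexp := Complex.exp_int_mul_two_pi_mul_I (k * t)
  push_cast at hexp
  simp only [Zop, O, amb]
  rw [map_smul, map_smul, map_smul, map_smul, smul_add, smul_smul, smul_smul, smul_smul,
    smul_smul, smul_add, smul_smul]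
  congr 1
  · congr 1
    rw [mul_comm]
    congr 1
    have harg : -(Complex.I * ((-β : ℝ) : ℂ) * (n.val : ℂ)) +
        -(Complex.I * (β : ℂ) * (((n - 1 : ZMod N).val : ℕ) : ℂ))
        = Complex.I * β + (k : ℂ) * t * (2 * Real.pi * Complex.I) := by
      push_cast
      rw [hn]
      have h2 : (β : ℂ) * N = 2 * Real.pi * k := hβN
      linear_combination Complex.I * (t : ℂ) * h2
    rw [← Complex.exp_add, harg, Complex.exp_add, hexp, mul_one]
  · congr 1
    rw [← Complex.exp_add]
    push_cast
    ring_nf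
    simp [Complex.exp_zero]
end
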